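/- arXiv:2203.12174 — 3 statements merged into one kernel-verified Lean document; each statement's English description precedes it below -/
import Mathlib

section
/- Let (H, ▷) be a cocommutative post-Hopf algebra. Then the comultiplication Δ is an algebra homomorphism with respect to the subadjacent product *▷, i.e., Δ(x *▷ y) = (x₁ *▷ y₁) ⊗ (x₂ *▷ y₂), where x *▷ y := x₁·(x₂ ▷ y). -/
/-!
Post-Hopf algebras (Li–Sheng–Tang). We work over a commutative ring `R`.
`Coalgebra.comul (A := H ⊗[R] H)` refers to the standard coalgebra structure
on the tensor product, so that `comul_rhd`/`counit_rhd` say exactly that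
`▷ : H ⊗ H → H` is a coalgebra homomorphism.  Sweedler sums such as
`(x₁ ▷ y)·(x₂ ▷ z)` are expressed by applying suitable linear maps to
`Coalgebra.comul x`.
-/

open TensorProduct Coalgebra LinearMap HopfAlgebra

variable (R H : Type*) [CommRing R] [Ring H] [HopfAlgebra R H]

/-- The subadjacent product `x *▷ y = x₁ · (x₂ ▷ y)` as a linear map
`H ⊗ H → H`, built from a binary operation `rhd : H ⊗ H →ₗ H`. -/
noncomputable def subProd (rhd : H ⊗[R] H →ₗ[R] H) : H ⊗[R] H →ₗ[R] H :=
  LinearMap.mul' R H ∘ₗ TensorProduct.map LinearMap.id rhd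
    ∘ₗ (TensorProduct.assoc R H H H).toLinearMap
    ∘ₗ TensorProduct.map Coalgebra.comul LinearMap.id

/-- Convolution product on `Hom(H, End(H))`: `(f * g)(x) = f(x₁) ∘ g(x₂)`. -/
noncomputable def convEnd (f g : H →ₗ[R] Module.End R H) : H →ₗ[R] Module.End R H :=
  LinearMap.mul' R (Module.End R H) ∘ₗ TensorProduct.map f g ∘ₗ Coalgebra.comul

/-- The unit `x ↦ ε(x)·id` of the convolution algebra `Hom(H, End(H))`. -/
noncomputable def convUnit : H →ₗ[R] Module.End R H :=
  Algebra.linearMap R (Module.End R H) ∘ₗ Coalgebra.counit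

/-- A post-Hopf algebra structure on the Hopf algebra `H`: a coalgebra
homomorphism `▷ : H ⊗ H → H` satisfying
`x ▷ (y·z) = (x₁ ▷ y)·(x₂ ▷ z)`, `x ▷ (y ▷ z) = (x₁·(x₂ ▷ y)) ▷ z`, and
such that `α : H → End H`, `α_x = x ▷ -`, is convolution invertible. -/
structure PostHopf : Type _ where
  /-- the binary operation `▷` -/
  rhd : H ⊗[R] H →ₗ[R] H
  /-- `▷` is comultiplicative -/
  comul_rhd : Coalgebra.comul ∘ₗ rhd
      = TensorProduct.map rhd rhd ∘ₗ (Coalgebra.comul (R := R) (A := H ⊗[R] H))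
  /-- `▷` is counital -/
  counit_rhd : Coalgebra.counit ∘ₗ rhd = (Coalgebra.counit (R := R) (A := H ⊗[R] H))
  /-- `x ▷ (y·z) = (x₁ ▷ y)·(x₂ ▷ z)` -/
  rhd_mul : ∀ x y z : H,
    rhd (x ⊗ₜ (y * z))
      = LinearMap.mul' R H
          (TensorProduct.map (rhd ∘ₗ (TensorProduct.mk R H H).flip y)
            (rhd ∘ₗ (TensorProduct.mk R H H).flip z) (Coalgebra.comul x))
  /-- `x ▷ (y ▷ z) = (x₁·(x₂ ▷ y)) ▷ z` -/
  rhd_rhd : ∀ x y z : H,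
    rhd (x ⊗ₜ rhd (y ⊗ₜ z)) = rhd (subProd R H rhd (x ⊗ₜ y) ⊗ₜ z)
  /-- `α : x ↦ (x ▷ -)` is convolution invertible in `Hom(H, End H)` -/
  conv_invertible : ∃ β : H →ₗ[R] Module.End R H,
    convEnd R H ((TensorProduct.mk R H H).compr₂ rhd) β = convUnit R H ∧
    convEnd R H β ((TensorProduct.mk R H H).compr₂ rhd) = convUnit R H

/-- Cocommutativity of the coalgebra `H`. -/
def IsCocomm : Prop :=
  ∀ x : H, (TensorProduct.comm R H H) (Coalgebra.comul x) = Coalgebra.comul x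

/-- The subadjacent antipode `S▷(x) = β_{x₁}(S(x₂))`, built from a
convolution inverse `β` of the left multiplication. -/
noncomputable def subAntipode (β : H →ₗ[R] Module.End R H) : H →ₗ[R] H :=
  TensorProduct.lift (β.compl₂ (HopfAlgebra.antipode (R := R) (A := H)))
    ∘ₗ Coalgebra.comul

/-- An element is primitive if `Δ(x) = 1 ⊗ x + x ⊗ 1`. -/
def IsPrimitive (x : H) : Prop :=
  Coalgebra.comul (R := R) x = (1 : H) ⊗ₜ x + x ⊗ₜ (1 : H)

/-
Each factor of `x ⊗ y ↦ x₁ · (x₂ ▷ y)` is a coalgebra morphism: `Δ` by cocommutativity, the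
associator, `id ⊗ ▷` because `▷` is one, and the multiplication of any bialgebra. Hence so is
the subadjacent product, and its compatibility with `Δ` is the claim.
-/

section SubadjacentProduct

variable {R H}

theorem IsCocomm.coalgebraIsCocomm (hcop : _root_.IsCocomm R H) : Coalgebra.IsCocomm R H :=
  ⟨LinearMap.ext hcop⟩

noncomputable def PostHopf.rhdCoalgHom (P : PostHopf R H) : H ⊗[R] H →ₗc[R] H where
  toLinearMap := P.rhd
  counit_comp := P.counit_rhd
  map_comp_comul := P.comul_rhd.symm

noncomputable def subProdCoalgHom [Coalgebra.IsCocomm R H] (rhd : H ⊗[R] H →ₗc[R] H) :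
    H ⊗[R] H →ₗc[R] H :=
  (Bialgebra.mulCoalgHom R H).comp <|
    (Coalgebra.TensorProduct.map (CoalgHom.id R H) rhd).comp <|
      (Coalgebra.TensorProduct.assoc R R H H H).toCoalgHom.comp <|
        Coalgebra.TensorProduct.map (comulCoalgHom R H) (CoalgHom.id R H)

theorem toLinearMap_subProdCoalgHom [Coalgebra.IsCocomm R H] (rhd : H ⊗[R] H →ₗc[R] H) :
    (subProdCoalgHom rhd).toLinearMap = subProd R H rhd.toLinearMap := by
  ext x y
  rfl

end SubadjacentProduct

/-- In a cocommutative post-Hopf algebra, the comultiplication is an algebra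
homomorphism for the subadjacent product:
`Δ(x *▷ y) = (x₁ *▷ y₁) ⊗ (x₂ *▷ y₂)`. -/
theorem comul_subProd (P : PostHopf R H) (hcop : _root_.IsCocomm R H) :
    Coalgebra.comul ∘ₗ subProd R H P.rhd
      = TensorProduct.map (subProd R H P.rhd) (subProd R H P.rhd)
          ∘ₗ (Coalgebra.comul (R := R) (A := H ⊗[R] H)) := by
  have := hcop.coalgebraIsCocomm
  have h := (subProdCoalgHom P.rhdCoalgHom).map_comp_comul
  rw [toLinearMap_subProdCoalgHom] at h
  exact h.symm
end

section
/- Let (H, ▷) be a cocommutative post-Hopf algebra. Define S▷(x) := β_{x₁}(S(x₂)), where β is the convolution inverse of α_x(y) = x ▷ y. Then S▷ is an antipode for the bialgebra (H, *▷, 1, Δ, ε), i.e., x₁ *▷ S▷(x₂) = ε(x)1 = S▷(x₁) *▷ x₂, where x *▷ y := x₁·(x₂ ▷ y). -/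
/-!
Post-Hopf algebras (Li–Sheng–Tang). We work over a commutative ring `R`.
`Coalgebra.comul (A := H ⊗[R] H)` refers to the standard coalgebra structure
on the tensor product, so that `comul_rhd`/`counit_rhd` say exactly that
`▷ : H ⊗ H → H` is a coalgebra homomorphism.  Sweedler sums such as
`(x₁ ▷ y)·(x₂ ▷ z)` are expressed by applying suitable linear maps to
`Coalgebra.comul x`.
-/

open TensorProduct Coalgebra LinearMap HopfAlgebra

variable (R H : Type*) [CommRing R] [Ring H] [HopfAlgebra R H]

/-!
The argument lives in convolution algebras `Hom(H, A)`, where `α_x = x ▷ -` has inverse `β` in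
`Hom(H, End H)`. The first identity is coassociativity alone:
`x₁ *▷ S▷(x₂) = x₁ · (α * β)(x₂)(S x₃) = x₁ · S(x₂) = ε(x)1`.
Since `x ↦ x ▷ 1` is a convolution-idempotent coalgebra map, `x ▷ 1 = ε(x)1`; together with
`α_x ∘ α_y = α_{x *▷ y}` this makes `α ∘ S▷` a right inverse of `α`, so `β = α ∘ S▷`.

For the second identity, `β` must inherit from `α` the properties of a measuring:
`Δ ∘ β_x = (β_{x₁} ⊗ β_{x₂}) ∘ Δ`, `β_x(ab) = β_{x₁}(a) β_{x₂}(b)` and `β_x(1) = ε(x)1`.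
A linear map intertwining two convolution-invertible families intertwines their inverses, and by
cocommutativity `x ↦ β_{x₁} ⊗ β_{x₂}` is the convolution inverse of `x ↦ α_{x₁} ⊗ α_{x₂}`.
Then `S▷` is a coalgebra map and
`S▷(x₁) *▷ x₂ = S▷(x₁) · β_{x₂}(x₃) = β_{x₁}(S(x₂) x₃) = β_x(1) = ε(x)1`.
-/

open WithConv

section ConvWith

variable {R}
variable {C P Q N : Type*} [AddCommMonoid C] [Module R C] [Coalgebra R C]
  [AddCommMonoid P] [AddCommMonoid Q] [AddCommMonoid N] [Module R P] [Module R Q] [Module R N]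

noncomputable def convWith (b : P →ₗ[R] Q →ₗ[R] N) (f : C →ₗ[R] P) (g : C →ₗ[R] Q) :
    C →ₗ[R] N :=
  lift b ∘ₗ map f g ∘ₗ comul

lemma convWith_mul {A : Type*} [Semiring A] [Algebra R A] (f g : C →ₗ[R] A) :
    convWith (LinearMap.mul R A) f g = (toConv f * toConv g).ofConv :=
  rfl

lemma convWith_assoc {S M₁ M₂ : Type*} [AddCommMonoid S] [AddCommMonoid M₁] [AddCommMonoid M₂]
    [Module R S] [Module R M₁] [Module R M₂]
    {b₁ : P →ₗ[R] M₁ →ₗ[R] N} {b₂ : Q →ₗ[R] S →ₗ[R] M₁}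
    {b₃ : M₂ →ₗ[R] S →ₗ[R] N} {b₄ : P →ₗ[R] Q →ₗ[R] M₂}
    (h : ∀ p q s, b₁ p (b₂ q s) = b₃ (b₄ p q) s)
    (f : C →ₗ[R] P) (g : C →ₗ[R] Q) (k : C →ₗ[R] S) :
    convWith b₃ (convWith b₄ f g) k = convWith b₁ f (convWith b₂ g k) := by
  have hb : lift b₃ ∘ₗ (lift b₄).rTensor S ∘ₗ (TensorProduct.assoc R P Q S).symm.toLinearMap
      = lift b₁ ∘ₗ (lift b₂).lTensor P := by
    ext; simp [h]
  have hcoassoc : map (map f g ∘ₗ comul) k ∘ₗ comul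
      = (TensorProduct.assoc R P Q S).symm.toLinearMap ∘ₗ map f (map g k ∘ₗ comul) ∘ₗ
          comul (R := R) := by
    simp only [coassoc_simps]
  calc convWith b₃ (convWith b₄ f g) k
      = (lift b₃ ∘ₗ (lift b₄).rTensor S ∘ₗ (TensorProduct.assoc R P Q S).symm.toLinearMap)
          ∘ₗ map f (map g k ∘ₗ comul) ∘ₗ comul := by
        rw [LinearMap.comp_assoc, LinearMap.comp_assoc, ← hcoassoc]
        simp only [convWith, coassoc_simps]
    _ = convWith b₁ f (convWith b₂ g k) := by
        rw [hb]; simp only [convWith, coassoc_simps]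

lemma convWith_counit_left (b : P →ₗ[R] Q →ₗ[R] N) (p : P) (g : C →ₗ[R] Q) :
    convWith b (toSpanSingleton R P p ∘ₗ counit) g = b p ∘ₗ g := by
  calc convWith b (toSpanSingleton R P p ∘ₗ counit) g
      = lift b ∘ₗ map (toSpanSingleton R P p) g ∘ₗ counit.rTensor C ∘ₗ comul := by
        simp only [convWith, coassoc_simps]
    _ = b p ∘ₗ g := by
        rw [Coalgebra.rTensor_counit_comp_comul]; ext; simp

lemma convWith_counit_right (b : P →ₗ[R] Q →ₗ[R] N) (f : C →ₗ[R] P) (q : Q) :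
    convWith b f (toSpanSingleton R Q q ∘ₗ counit) = b.flip q ∘ₗ f := by
  calc convWith b f (toSpanSingleton R Q q ∘ₗ counit)
      = lift b ∘ₗ map f (toSpanSingleton R Q q) ∘ₗ counit.lTensor C ∘ₗ comul := by
        simp only [convWith, coassoc_simps]
    _ = b.flip q ∘ₗ f := by
        rw [Coalgebra.lTensor_counit_comp_comul]; ext; simp

lemma tensorTensorTensorComm_comp_map_comul_comp_comul [Coalgebra.IsCocomm R C] :
    (tensorTensorTensorComm R C C C C).toLinearMap ∘ₗ map comul comul ∘ₗ comul (R := R) (A := C)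
      = map comul comul ∘ₗ comul := by
  simp [coassoc_simps]

lemma convWith_map_comp_comul [Coalgebra.IsCocomm R C]
    {P' Q' N' X Y Z : Type*} [AddCommMonoid P'] [AddCommMonoid Q'] [AddCommMonoid N']
    [AddCommMonoid X] [AddCommMonoid Y] [AddCommMonoid Z]
    [Module R P'] [Module R Q'] [Module R N'] [Module R X] [Module R Y] [Module R Z]
    {b : P →ₗ[R] Q →ₗ[R] N} {b' : P' →ₗ[R] Q' →ₗ[R] N'} {e : X →ₗ[R] Y →ₗ[R] Z}
    {φ : P ⊗[R] P' →ₗ[R] X} {ψ : Q ⊗[R] Q' →ₗ[R] Y} {θ : N ⊗[R] N' →ₗ[R] Z}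
    (h : ∀ p p' q q', e (φ (p ⊗ₜ p')) (ψ (q ⊗ₜ q')) = θ (b p q ⊗ₜ b' p' q'))
    (f : C →ₗ[R] P) (f' : C →ₗ[R] P') (g : C →ₗ[R] Q) (g' : C →ₗ[R] Q') :
    convWith e (φ ∘ₗ map f f' ∘ₗ comul) (ψ ∘ₗ map g g' ∘ₗ comul)
      = θ ∘ₗ map (convWith b f g) (convWith b' f' g') ∘ₗ comul := by
  have hpair : lift e ∘ₗ map (φ ∘ₗ map f f') (ψ ∘ₗ map g g')
      = θ ∘ₗ map (lift b ∘ₗ map f g) (lift b' ∘ₗ map f' g') ∘ₗ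
          (tensorTensorTensorComm R C C C C).toLinearMap := by
    ext; simp [h]
  calc convWith e (φ ∘ₗ map f f' ∘ₗ comul) (ψ ∘ₗ map g g' ∘ₗ comul)
      = lift e ∘ₗ map (φ ∘ₗ map f f') (ψ ∘ₗ map g g') ∘ₗ map comul comul ∘ₗ comul := by
        simp only [convWith, coassoc_simps]
    _ = θ ∘ₗ map (convWith b f g) (convWith b' f' g') ∘ₗ comul := by
        rw [← LinearMap.comp_assoc, hpair]
        simp only [LinearMap.comp_assoc, tensorTensorTensorComm_comp_map_comul_comp_comul]
        simp only [convWith, coassoc_simps]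

end ConvWith

section ConvAct

variable {R}
variable {C M V W : Type*} [AddCommMonoid C] [Module R C] [Coalgebra R C]
  [AddCommMonoid M] [Module R M] [AddCommMonoid V] [Module R V] [AddCommMonoid W] [Module R W]

noncomputable def convAct (f : C →ₗ[R] Module.End R M) (u : C →ₗ[R] M) : C →ₗ[R] M :=
  convWith LinearMap.id f u

lemma convAct_eq_lift (f : C →ₗ[R] Module.End R M) (u : C →ₗ[R] M) :
    convAct f u = lift f ∘ₗ map LinearMap.id u ∘ₗ comul := by
  simp only [convAct, convWith, ← LinearMap.comp_assoc, lift_comp_map, LinearMap.comp_id]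
  rfl

lemma convAct_convAct (f g : C →ₗ[R] Module.End R M) (u : C →ₗ[R] M) :
    convAct f (convAct g u) = convAct (toConv f * toConv g).ofConv u :=
  (convWith_assoc (fun _ _ _ => rfl) f g u).symm

lemma convAct_one (u : C →ₗ[R] M) :
    convAct (1 : WithConv (C →ₗ[R] Module.End R M)).ofConv u = u := by
  rw [LinearMap.convOne_def, ofConv_toConv, ← toSpanSingleton_one_eq_algebraLinearMap, convAct,
    convWith_counit_left]
  rfl

lemma convAct_counit (f : C →ₗ[R] Module.End R M) (m : M) :
    convAct f (toSpanSingleton R M m ∘ₗ counit) = LinearMap.applyₗ m ∘ₗ f :=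
  convWith_counit_right _ _ _

lemma comp_convAct {f : C →ₗ[R] Module.End R V} {g : C →ₗ[R] Module.End R W} {m : V →ₗ[R] W}
    (h : ∀ c, m ∘ₗ f c = g c ∘ₗ m) (u : C →ₗ[R] V) :
    m ∘ₗ convAct f u = convAct g (m ∘ₗ u) := by
  have hm : m ∘ₗ lift LinearMap.id ∘ₗ map f LinearMap.id = lift LinearMap.id ∘ₗ map g m := by
    ext c v
    exact LinearMap.congr_fun (h c) v
  calc m ∘ₗ convAct f u
      = (m ∘ₗ lift LinearMap.id ∘ₗ map f LinearMap.id) ∘ₗ map LinearMap.id u ∘ₗ comul := by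
        simp only [convAct, convWith, coassoc_simps]
    _ = convAct g (m ∘ₗ u) := by
        rw [hm]; simp only [convAct, convWith, coassoc_simps]

lemma comp_eq_comp_of_convMul_eq_one {f f' : C →ₗ[R] Module.End R V}
    {g g' : C →ₗ[R] Module.End R W} {m : V →ₗ[R] W}
    (hf : toConv f * toConv f' = 1) (hg : toConv g' * toConv g = 1)
    (h : ∀ c, m ∘ₗ f c = g c ∘ₗ m) (c : C) : m ∘ₗ f' c = g' c ∘ₗ m := by
  set post : Module.End R W →ₗ[R] (V →ₗ[R] W) →ₗ[R] V →ₗ[R] W := LinearMap.llcomp R V W W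
  set pre : (V →ₗ[R] W) →ₗ[R] Module.End R V →ₗ[R] V →ₗ[R] W := LinearMap.llcomp R V V W
  set mε := toSpanSingleton R (V →ₗ[R] W) m ∘ₗ counit (R := R) (A := C)
  have hmf : convWith pre mε f = convWith post g mε := by
    rw [convWith_counit_left, convWith_counit_right]
    ext1 c
    exact h c
  suffices convWith pre mε f' = convWith post g' mε by
    rw [convWith_counit_left, convWith_counit_right] at this
    exact LinearMap.congr_fun this c
  have one_left : ∀ k, convWith post (toConv g' * toConv g).ofConv k = k := by
    intro k
    rw [hg, LinearMap.convOne_def, ofConv_toConv, ← toSpanSingleton_one_eq_algebraLinearMap,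
      convWith_counit_left]
    rfl
  have one_right : convWith pre mε (toConv f * toConv f').ofConv = mε := by
    rw [hf, LinearMap.convOne_def, ofConv_toConv, ← toSpanSingleton_one_eq_algebraLinearMap,
      convWith_counit_right]
    rfl
  calc convWith pre mε f'
      = convWith post (toConv g' * toConv g).ofConv (convWith pre mε f') := (one_left _).symm
    _ = convWith post g' (convWith post g (convWith pre mε f')) :=
        convWith_assoc (b₁ := post) (b₂ := post) (fun _ _ _ => rfl) _ _ _
    _ = convWith post g' (convWith pre (convWith pre mε f) f') := by
        rw [hmf, convWith_assoc (b₁ := post) (b₂ := pre) (fun _ _ _ => rfl)]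
    _ = convWith post g' mε := by
        conv_rhs => rw [← one_right]
        rw [convWith_assoc (b₁ := pre) (b₂ := LinearMap.mul R _) (fun _ _ _ => rfl)]
        rfl

end ConvAct

section TensorSquare

variable {R}
variable {C M : Type*} [AddCommMonoid C] [Module R C] [Coalgebra R C]
  [AddCommMonoid M] [Module R M]

noncomputable def tensorSquare (f : C →ₗ[R] Module.End R M) : C →ₗ[R] Module.End R (M ⊗[R] M) :=
  convWith (mapBilinear (RingHom.id R) M M M M) f f

lemma tensorSquare_one :
    tensorSquare (1 : WithConv (C →ₗ[R] Module.End R M)).ofConv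
      = (1 : WithConv (C →ₗ[R] Module.End R (M ⊗[R] M))).ofConv := by
  simp only [LinearMap.convOne_def, ofConv_toConv, ← toSpanSingleton_one_eq_algebraLinearMap,
    tensorSquare, convWith_counit_left]
  ext
  simp

variable [Coalgebra.IsCocomm R C]

lemma tensorSquare_convMul (f g : C →ₗ[R] Module.End R M) :
    toConv (tensorSquare (toConv f * toConv g).ofConv)
      = toConv (tensorSquare f) * toConv (tensorSquare g) := by
  ext1
  exact (convWith_map_comp_comul (b := LinearMap.mul R _) (b' := LinearMap.mul R _)
    (fun p p' q q' => (TensorProduct.map_mul p q p' q').symm) f f g g).symm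

lemma convAct_tensorSquare (f : C →ₗ[R] Module.End R M) (u v : C →ₗ[R] M) :
    convAct (tensorSquare f) (map u v ∘ₗ comul) = map (convAct f u) (convAct f v) ∘ₗ comul := by
  have hinterchange := convWith_map_comp_comul (b := LinearMap.id) (b' := LinearMap.id)
    (e := LinearMap.id) (φ := lift (mapBilinear (RingHom.id R) M M M M)) (ψ := LinearMap.id) (θ := LinearMap.id)
    (fun _ _ _ _ => rfl) f f u v
  rwa [LinearMap.id_comp, LinearMap.id_comp] at hinterchange

end TensorSquare

section HopfAlgebra

variable {R H}

lemma comul_comp_antipode [Coalgebra.IsCocomm R H] :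
    comul ∘ₗ antipode R = map (antipode R) (antipode R) ∘ₗ comul (R := R) (A := H) := by
  have hunit : map (1 : WithConv (H →ₗ[R] H)).ofConv (1 : WithConv (H →ₗ[R] H)).ofConv ∘ₗ comul
      = (1 : WithConv (H →ₗ[R] H ⊗[R] H)).ofConv := by
    calc map (1 : WithConv (H →ₗ[R] H)).ofConv (1 : WithConv (H →ₗ[R] H)).ofConv ∘ₗ comul
        = convWith (TensorProduct.mk R H H) (toSpanSingleton R H 1 ∘ₗ counit)
            (toSpanSingleton R H 1 ∘ₗ counit) := by
          simp only [convWith, lift_mk, LinearMap.id_comp, LinearMap.convOne_def, ofConv_toConv,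
            toSpanSingleton_one_eq_algebraLinearMap]
      _ = (1 : WithConv (H →ₗ[R] H ⊗[R] H)).ofConv := by
          rw [convWith_counit_left]
          ext
          simp [Algebra.algebraMap_eq_smul_one, TensorProduct.smul_tmul',
            Algebra.TensorProduct.one_def]
  have hleft : toConv (map (antipode R) (antipode R) ∘ₗ comul) * toConv comul
      = (1 : WithConv (H →ₗ[R] H ⊗[R] H)) := by
    ext1
    have hinterchange := convWith_map_comp_comul (b := LinearMap.mul R H) (b' := LinearMap.mul R H)
      (e := LinearMap.mul R (H ⊗[R] H)) (φ := LinearMap.id) (ψ := LinearMap.id)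
      (θ := LinearMap.id) (fun _ _ _ _ => Algebra.TensorProduct.tmul_mul_tmul ..)
      (antipode R) (antipode R) LinearMap.id LinearMap.id
    simp only [LinearMap.id_comp, map_id, convWith_mul, antipode_mul_id] at hinterchange
    rw [← hunit, ← hinterchange]
  exact congrArg ofConv (left_inv_eq_right_inv hleft comul_right_inv).symm

lemma toConv_coalgHom_eq_one_of_mul_self {C : Type*} [AddCommMonoid C] [Module R C] [Coalgebra R C]
    (c : C →ₗc[R] H)
    (hc : toConv c.toLinearMap * toConv c.toLinearMap = toConv c.toLinearMap) :
    toConv c.toLinearMap = 1 := by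
  have hinv : toConv c.toLinearMap * toConv (antipode R ∘ₗ c.toLinearMap) = 1 := by
    calc toConv c.toLinearMap * toConv (antipode R ∘ₗ c.toLinearMap)
        = toConv ((toConv (LinearMap.id : H →ₗ[R] H) * toConv (antipode R)).ofConv
            ∘ₗ c.toLinearMap) := by
          rw [LinearMap.convMul_comp_coalgHom_distrib]; rfl
      _ = 1 := by
          rw [LinearMap.id_mul_antipode, LinearMap.convOne_def, ofConv_toConv,
            LinearMap.comp_assoc, c.counit_comp]
          rfl
  calc toConv c.toLinearMap
      = toConv c.toLinearMap * (toConv c.toLinearMap * toConv (antipode R ∘ₗ c.toLinearMap)) := by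
        rw [hinv, mul_one]
    _ = 1 := by rw [← mul_assoc, hc, hinv]

end HopfAlgebra

section SubadjacentMaps

variable {R H}

lemma subProd_comp_map_comp_comul (rhd : H ⊗[R] H →ₗ[R] H) {u : H →ₗ[R] H}
    (hu : comul ∘ₗ u = map u u ∘ₗ comul (R := R)) (v : H →ₗ[R] H) :
    subProd R H rhd ∘ₗ map u v ∘ₗ comul
      = convWith (LinearMap.mul R H) u (rhd ∘ₗ map u v ∘ₗ comul) := by
  simp only [subProd, convWith, coassoc_simps, hu]
  rfl

lemma subAntipode_eq_convAct (β : H →ₗ[R] Module.End R H) :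
    subAntipode R H β = convAct β (antipode R) := by
  rw [convAct_eq_lift, subAntipode, ← LinearMap.comp_assoc, lift_comp_map, LinearMap.comp_id]

end SubadjacentMaps

namespace PostHopf

variable {R H} (P : PostHopf R H)

def rhdCoalgHom_s6 : H ⊗[R] H →ₗc[R] H where
  toLinearMap := P.rhd
  counit_comp := P.counit_rhd
  map_comp_comul := P.comul_rhd.symm

lemma lift_curry_rhd : lift (curry P.rhd) = P.rhd :=
  lift_mk_compr₂ P.rhd

lemma rhd_tmul_one (x : H) : P.rhd (x ⊗ₜ 1) = counit (R := R) x • 1 := by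
  let c : H →ₗc[R] H :=
    P.rhdCoalgHom_s6.comp <| (CoalgHom.lTensor H (Bialgebra.unitBialgHom R H).toCoalgHom).comp
      (Coalgebra.TensorProduct.rid R R H).symm.toCoalgHom
  have hc : c.toLinearMap = P.rhd ∘ₗ (TensorProduct.mk R H H).flip 1 := by
    ext y
    exact congrArg (fun h => P.rhd (y ⊗ₜ h)) (map_one (Bialgebra.unitBialgHom R H))
  have hidem : toConv c.toLinearMap * toConv c.toLinearMap = toConv c.toLinearMap := by
    ext1
    ext y
    rw [hc]
    simpa using (P.rhd_mul y 1 1).symm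
  have hunit := congrArg ofConv (toConv_coalgHom_eq_one_of_mul_self c hidem)
  rw [ofConv_toConv, hc] at hunit
  simpa [Algebra.algebraMap_eq_smul_one] using LinearMap.congr_fun hunit x

lemma subProd_one_one : subProd R H P.rhd (1 ⊗ₜ 1) = 1 := by
  simp [subProd, Bialgebra.comul_one, Algebra.TensorProduct.one_def, P.rhd_tmul_one]

lemma mul'_comp_map_curry_rhd :
    LinearMap.mul' R (Module.End R H) ∘ₗ map (curry P.rhd) (curry P.rhd)
      = curry P.rhd ∘ₗ subProd R H P.rhd := by
  ext x y z
  exact P.rhd_rhd x y z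

lemma comul_comp_curry_rhd (x : H) :
    comul ∘ₗ curry P.rhd x = tensorSquare (curry P.rhd) x ∘ₗ comul := by
  have hpair : map P.rhd P.rhd ∘ₗ (tensorTensorTensorComm R H H H H).toLinearMap
      = lift (lift (mapBilinear (RingHom.id R) H H H H) ∘ₗ map (curry P.rhd) (curry P.rhd)) := by
    ext; rfl
  ext y
  have hcomul := LinearMap.congr_fun P.comul_rhd (x ⊗ₜ y)
  simp only [LinearMap.comp_apply, TensorProduct.comul_tmul,
    AlgebraTensorModule.tensorTensorTensorComm_eq] at hcomul
  rw [LinearMap.comp_apply, curry_apply, hcomul]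
  exact LinearMap.congr_fun hpair _

lemma mul'_comp_tensorSquare_curry_rhd (x : H) :
    LinearMap.mul' R H ∘ₗ tensorSquare (curry P.rhd) x = curry P.rhd x ∘ₗ LinearMap.mul' R H := by
  ext y z
  have hpair : LinearMap.applyₗ (y ⊗ₜ[R] z) ∘ₗ lift (mapBilinear (RingHom.id R) H H H H) ∘ₗ
      map (curry P.rhd) (curry P.rhd)
      = map (P.rhd ∘ₗ (TensorProduct.mk R H H).flip y)
          (P.rhd ∘ₗ (TensorProduct.mk R H H).flip z) := by
    ext; rfl
  show LinearMap.mul' R H (tensorSquare (curry P.rhd) x (y ⊗ₜ z)) = P.rhd (x ⊗ₜ (y * z))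
  rw [P.rhd_mul, ← hpair]
  rfl

variable {β : H →ₗ[R] Module.End R H}

lemma curry_rhd_one (hβ : toConv (curry P.rhd) * toConv β = 1) : curry P.rhd 1 = 1 := by
  have hidem : curry P.rhd 1 * curry P.rhd 1 = curry P.rhd 1 := by
    simpa [subProd_one_one] using LinearMap.congr_fun P.mul'_comp_map_curry_rhd (1 ⊗ₜ 1)
  have hinv : curry P.rhd 1 * β 1 = 1 := by
    simpa [Bialgebra.comul_one, Algebra.TensorProduct.one_def] using
      LinearMap.congr_fun (congrArg ofConv hβ) 1
  calc curry P.rhd 1 = curry P.rhd 1 * (curry P.rhd 1 * β 1) := by rw [hinv, mul_one]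
    _ = 1 := by rw [← mul_assoc, hidem, hinv]

theorem subProd_map_id_subAntipode (hβ : toConv (curry P.rhd) * toConv β = 1) :
    subProd R H P.rhd ∘ₗ map LinearMap.id (subAntipode R H β) ∘ₗ comul
      = (1 : WithConv (H →ₗ[R] H)).ofConv := by
  rw [subProd_comp_map_comp_comul P.rhd (u := LinearMap.id) (by simp), ← P.lift_curry_rhd,
    ← convAct_eq_lift, subAntipode_eq_convAct, convAct_convAct, hβ, convAct_one, convWith_mul,
    LinearMap.id_mul_antipode]

lemma eq_curry_rhd_comp_subAntipode (hβ₁ : toConv (curry P.rhd) * toConv β = 1)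
    (hβ₂ : toConv β * toConv (curry P.rhd) = 1) :
    β = curry P.rhd ∘ₗ subAntipode R H β := by
  have hright : toConv (curry P.rhd) * toConv (curry P.rhd ∘ₗ subAntipode R H β) = 1 := by
    ext1
    calc (toConv (curry P.rhd) * toConv (curry P.rhd ∘ₗ subAntipode R H β)).ofConv
        = (LinearMap.mul' R (Module.End R H) ∘ₗ map (curry P.rhd) (curry P.rhd))
            ∘ₗ map LinearMap.id (subAntipode R H β) ∘ₗ comul := by
          simp only [LinearMap.convMul_def, ofConv_toConv, coassoc_simps]
      _ = curry P.rhd ∘ₗ (1 : WithConv (H →ₗ[R] H)).ofConv := by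
          rw [mul'_comp_map_curry_rhd, LinearMap.comp_assoc, P.subProd_map_id_subAntipode hβ₁]
      _ = (1 : WithConv (H →ₗ[R] Module.End R H)).ofConv := by
          ext x : 1
          simp [P.curry_rhd_one hβ₁, Algebra.algebraMap_eq_smul_one]
  exact congrArg ofConv (left_inv_eq_right_inv hβ₂ hright)

lemma inv_apply_one (hβ : toConv β * toConv (curry P.rhd) = 1) (x : H) :
    β x 1 = counit (R := R) x • 1 := by
  have hone : toConv (1 : WithConv (H →ₗ[R] Module.End R R)).ofConv
      * toConv (1 : WithConv (H →ₗ[R] Module.End R R)).ofConv = 1 := mul_one _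
  have hunit := comp_eq_comp_of_convMul_eq_one (m := Algebra.linearMap R H) hone hβ
    (fun y => by ext; simp [P.rhd_tmul_one, Algebra.algebraMap_eq_smul_one]) x
  simpa [Algebra.algebraMap_eq_smul_one] using (LinearMap.congr_fun hunit 1).symm

variable [Coalgebra.IsCocomm R H]

lemma comul_comp_inv (hβ₁ : toConv (curry P.rhd) * toConv β = 1)
    (hβ₂ : toConv β * toConv (curry P.rhd) = 1) (x : H) :
    comul ∘ₗ β x = tensorSquare β x ∘ₗ comul :=
  comp_eq_comp_of_convMul_eq_one hβ₁
    (by rw [← tensorSquare_convMul, hβ₂, tensorSquare_one]) P.comul_comp_curry_rhd x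

lemma mul'_comp_tensorSquare_inv (hβ₁ : toConv (curry P.rhd) * toConv β = 1)
    (hβ₂ : toConv β * toConv (curry P.rhd) = 1) (x : H) :
    LinearMap.mul' R H ∘ₗ tensorSquare β x = β x ∘ₗ LinearMap.mul' R H :=
  comp_eq_comp_of_convMul_eq_one
    (by rw [← tensorSquare_convMul, hβ₁, tensorSquare_one]) hβ₂
    P.mul'_comp_tensorSquare_curry_rhd x

lemma convAct_inv_convMul (hβ₁ : toConv (curry P.rhd) * toConv β = 1)
    (hβ₂ : toConv β * toConv (curry P.rhd) = 1) (u v : H →ₗ[R] H) :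
    toConv (convAct β u) * toConv (convAct β v)
      = toConv (convAct β (toConv u * toConv v).ofConv) := by
  ext1
  calc (toConv (convAct β u) * toConv (convAct β v)).ofConv
      = LinearMap.mul' R H ∘ₗ map (convAct β u) (convAct β v) ∘ₗ comul := rfl
    _ = LinearMap.mul' R H ∘ₗ convAct (tensorSquare β) (map u v ∘ₗ comul) := by
        rw [convAct_tensorSquare]
    _ = convAct β (toConv u * toConv v).ofConv :=
        comp_convAct (P.mul'_comp_tensorSquare_inv hβ₁ hβ₂) _

lemma comul_comp_subAntipode (hβ₁ : toConv (curry P.rhd) * toConv β = 1)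
    (hβ₂ : toConv β * toConv (curry P.rhd) = 1) :
    comul ∘ₗ subAntipode R H β = map (subAntipode R H β) (subAntipode R H β) ∘ₗ comul := by
  rw [subAntipode_eq_convAct, comp_convAct (P.comul_comp_inv hβ₁ hβ₂), comul_comp_antipode,
    convAct_tensorSquare]

theorem subProd_map_subAntipode_id (hβ₁ : toConv (curry P.rhd) * toConv β = 1)
    (hβ₂ : toConv β * toConv (curry P.rhd) = 1) :
    subProd R H P.rhd ∘ₗ map (subAntipode R H β) LinearMap.id ∘ₗ comul
      = (1 : WithConv (H →ₗ[R] H)).ofConv := by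
  have hrhd : P.rhd ∘ₗ map (subAntipode R H β) LinearMap.id = lift β := by
    conv_rhs => rw [P.eq_curry_rhd_comp_subAntipode hβ₁ hβ₂]
    ext
    rfl
  calc subProd R H P.rhd ∘ₗ map (subAntipode R H β) LinearMap.id ∘ₗ comul
      = convWith (LinearMap.mul R H) (subAntipode R H β)
          (P.rhd ∘ₗ map (subAntipode R H β) LinearMap.id ∘ₗ comul) :=
        subProd_comp_map_comp_comul P.rhd (P.comul_comp_subAntipode hβ₁ hβ₂) _
    _ = (toConv (convAct β (antipode R)) * toConv (convAct β LinearMap.id)).ofConv := by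
        rw [← LinearMap.comp_assoc, hrhd, convAct_eq_lift β LinearMap.id, map_id,
          LinearMap.id_comp, subAntipode_eq_convAct]
        rfl
    _ = convAct β (toConv (antipode R (A := H)) * toConv LinearMap.id).ofConv := by
        rw [P.convAct_inv_convMul hβ₁ hβ₂]
    _ = (1 : WithConv (H →ₗ[R] H)).ofConv := by
        rw [LinearMap.antipode_mul_id, LinearMap.convOne_def, ofConv_toConv,
          ← toSpanSingleton_one_eq_algebraLinearMap, convAct_counit]
        ext x
        simp [P.inv_apply_one hβ₂]

end PostHopf

/-- In a cocommutative post-Hopf algebra, `S▷(x) = β_{x₁}(S(x₂))` is an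
antipode for the bialgebra `(H, *▷, 1, Δ, ε)`:
`x₁ *▷ S▷(x₂) = ε(x)1 = S▷(x₁) *▷ x₂`. -/
theorem subAntipode_spec (P : PostHopf R H) (hcop : _root_.IsCocomm R H)
    (β : H →ₗ[R] Module.End R H)
    (hβ₁ : convEnd R H ((TensorProduct.mk R H H).compr₂ P.rhd) β = convUnit R H)
    (hβ₂ : convEnd R H β ((TensorProduct.mk R H H).compr₂ P.rhd) = convUnit R H)
    (x : H) :
    subProd R H P.rhd
        (TensorProduct.map LinearMap.id (subAntipode R H β) (Coalgebra.comul x))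
      = Coalgebra.counit (R := R) x • (1 : H) ∧
    subProd R H P.rhd
        (TensorProduct.map (subAntipode R H β) LinearMap.id (Coalgebra.comul x))
      = Coalgebra.counit (R := R) x • (1 : H) := by
  have : Coalgebra.IsCocomm R H := ⟨LinearMap.ext hcop⟩
  have h₁ : toConv (curry P.rhd) * toConv β = 1 := congrArg toConv hβ₁
  have h₂ : toConv β * toConv (curry P.rhd) = 1 := congrArg toConv hβ₂
  constructor
  · simpa [Algebra.algebraMap_eq_smul_one] using
      LinearMap.congr_fun (P.subProd_map_id_subAntipode h₁) x
  · simpa [Algebra.algebraMap_eq_smul_one] using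
      LinearMap.congr_fun (P.subProd_map_subAntipode_id h₁ h₂) x
end

section
/- Let (H, ▷) be a post-Hopf algebra. Then the restriction of ▷ to the space P(H) of primitive elements is well-defined (i.e., x ▷ y is primitive whenever x, y are primitive), and (P(H), [·,·], ▷) is a post-Lie algebra, where [x,y] = xy − yx. -/
/-!
Post-Hopf algebras (Li–Sheng–Tang). We work over a commutative ring `R`.
`Coalgebra.comul (A := H ⊗[R] H)` refers to the standard coalgebra structure
on the tensor product, so that `comul_rhd`/`counit_rhd` say exactly that
`▷ : H ⊗ H → H` is a coalgebra homomorphism.  Sweedler sums such as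
`(x₁ ▷ y)·(x₂ ▷ z)` are expressed by applying suitable linear maps to
`Coalgebra.comul x`.
-/

open TensorProduct Coalgebra LinearMap HopfAlgebra

variable (R H : Type*) [CommRing R] [Ring H] [HopfAlgebra R H]

/-!
Everything rests on unitality, `1 ▷ y = y`. The element `1 ▷ 1` is group-like (`▷` is a
coalgebra map) and idempotent (by `x ▷ (y·z) = (x₁ ▷ y)·(x₂ ▷ z)`), hence a unit equal to `1`.
Then `1 ▷ -` is idempotent (by `x ▷ (y ▷ z) = (x₁·(x₂ ▷ y)) ▷ z`) and a unit of `End H`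
(its convolution inverse evaluated at `1`), hence the identity. For primitive `x` this gives
`x ▷ 1 = 0`, and the Sweedler sums in the axioms collapse: `x ▷ -` becomes a derivation and
`x₁·(x₂ ▷ y)` becomes `x ▷ y + x·y`, which turns the second axiom into the post-Lie identity.
-/

section

variable {R H}

lemma convEnd_apply_of_isGroupLikeElem (f g : H →ₗ[R] Module.End R H) {a : H}
    (ha : IsGroupLikeElem R a) : convEnd R H f g a = f a * g a := by
  simp [convEnd, ha.comul_eq_tmul_self]

lemma convUnit_apply_of_isGroupLikeElem {a : H} (ha : IsGroupLikeElem R a) :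
    convUnit R H a = 1 := by
  simp [convUnit, ha.counit_eq_one]

lemma subProd_one_tmul (rhd : H ⊗[R] H →ₗ[R] H) (y : H) :
    subProd R H rhd (1 ⊗ₜ y) = rhd (1 ⊗ₜ y) := by
  simp [subProd, IsGroupLikeElem.one.comul_eq_tmul_self]

end

namespace PostHopf

variable {R H} (P : PostHopf R H)

lemma comul_rhd_tmul (x y : H) :
    comul (R := R) (P.rhd (x ⊗ₜ y))
      = map P.rhd P.rhd (tensorTensorTensorComm R H H H H (comul x ⊗ₜ comul y)) := by
  simpa [TensorProduct.comul_def, AlgebraTensorModule.tensorTensorTensorComm_eq]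
    using LinearMap.congr_fun P.comul_rhd (x ⊗ₜ[R] y)

lemma counit_rhd_tmul (x y : H) :
    counit (R := R) (P.rhd (x ⊗ₜ y)) = counit (R := R) x * counit (R := R) y := by
  simpa [TensorProduct.counit_def, mul_comm] using LinearMap.congr_fun P.counit_rhd (x ⊗ₜ[R] y)

lemma isGroupLikeElem_rhd {a b : H} (ha : IsGroupLikeElem R a) (hb : IsGroupLikeElem R b) :
    IsGroupLikeElem R (P.rhd (a ⊗ₜ b)) where
  counit_eq_one := by simp [counit_rhd_tmul, ha.counit_eq_one, hb.counit_eq_one]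
  comul_eq_tmul_self := by simp [comul_rhd_tmul, ha.comul_eq_tmul_self, hb.comul_eq_tmul_self]

lemma one_rhd_one : P.rhd ((1 : H) ⊗ₜ (1 : H)) = 1 := by
  have hgrouplike := P.isGroupLikeElem_rhd (IsGroupLikeElem.one (R := R) (A := H)) .one
  have hidem : P.rhd ((1 : H) ⊗ₜ (1 : H)) * P.rhd (1 ⊗ₜ 1) = P.rhd (1 ⊗ₜ 1) := by
    simpa [IsGroupLikeElem.one.comul_eq_tmul_self] using (P.rhd_mul 1 1 1).symm
  exact (IsIdempotentElem.iff_eq_one_of_isUnit hgrouplike.isUnit).mp hidem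

lemma isUnit_rhd_one : IsUnit ((TensorProduct.mk R H H).compr₂ P.rhd 1) := by
  obtain ⟨β, hαβ, hβα⟩ := P.conv_invertible
  have h1 : IsGroupLikeElem R (1 : H) := .one
  refine ⟨⟨_, β 1, ?_, ?_⟩, rfl⟩
  · rw [← convEnd_apply_of_isGroupLikeElem _ _ h1, hαβ, convUnit_apply_of_isGroupLikeElem h1]
  · rw [← convEnd_apply_of_isGroupLikeElem _ _ h1, hβα, convUnit_apply_of_isGroupLikeElem h1]

lemma one_rhd (y : H) : P.rhd (1 ⊗ₜ y) = y := by
  have hidem : IsIdempotentElem ((TensorProduct.mk R H H).compr₂ P.rhd 1) := by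
    ext w
    simpa [subProd_one_tmul, one_rhd_one] using P.rhd_rhd 1 1 w
  exact LinearMap.congr_fun ((IsIdempotentElem.iff_eq_one_of_isUnit P.isUnit_rhd_one).mp hidem) y

variable {P}

lemma rhd_one_of_isPrimitive {x : H} (hx : IsPrimitive R H x) : P.rhd (x ⊗ₜ 1) = 0 := by
  have h := P.rhd_mul x 1 1
  rw [hx] at h
  simp only [mul_one, map_add, map_tmul, comp_apply, flip_apply, mk_apply, mul'_apply,
    one_rhd_one, one_mul] at h
  exact left_eq_add.mp h

lemma rhd_mul_of_isPrimitive {x : H} (hx : IsPrimitive R H x) (y z : H) :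
    P.rhd (x ⊗ₜ (y * z)) = P.rhd (x ⊗ₜ y) * z + y * P.rhd (x ⊗ₜ z) := by
  rw [P.rhd_mul, hx]
  simp [one_rhd, add_comm]

lemma subProd_of_isPrimitive {x : H} (hx : IsPrimitive R H x) (y : H) :
    subProd R H P.rhd (x ⊗ₜ y) = P.rhd (x ⊗ₜ y) + x * y := by
  simp only [subProd, comp_apply, map_tmul]
  rw [hx]
  simp [add_tmul, one_rhd]

lemma isPrimitive_rhd {x y : H} (hx : IsPrimitive R H x) (hy : IsPrimitive R H y) :
    IsPrimitive R H (P.rhd (x ⊗ₜ y)) := by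
  rw [IsPrimitive, comul_rhd_tmul, hx, hy]
  simp [tmul_add, add_tmul, one_rhd, rhd_one_of_isPrimitive hx]

end PostHopf

/-- In a post-Hopf algebra `(H, ▷)`, the operation `▷` restricts to the space
of primitive elements, and together with the commutator bracket it makes
`P(H)` a post-Lie algebra. -/
theorem primitives_postLie (P : PostHopf R H) :
    (∀ x y : H, IsPrimitive R H x → IsPrimitive R H y →
      IsPrimitive R H (P.rhd (x ⊗ₜ y))) ∧
    (∀ x y z : H, IsPrimitive R H x → IsPrimitive R H y → IsPrimitive R H z →
      P.rhd (x ⊗ₜ (y * z - z * y))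
        = (P.rhd (x ⊗ₜ y) * z - z * P.rhd (x ⊗ₜ y))
          + (y * P.rhd (x ⊗ₜ z) - P.rhd (x ⊗ₜ z) * y)) ∧
    (∀ x y z : H, IsPrimitive R H x → IsPrimitive R H y → IsPrimitive R H z →
      P.rhd (((x * y - y * x) + P.rhd (x ⊗ₜ y) - P.rhd (y ⊗ₜ x)) ⊗ₜ z)
        = P.rhd (x ⊗ₜ P.rhd (y ⊗ₜ z)) - P.rhd (y ⊗ₜ P.rhd (x ⊗ₜ z))) := by
  refine ⟨fun x y hx hy ↦ PostHopf.isPrimitive_rhd hx hy, fun x y z hx _ _ ↦ ?_,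
    fun x y z hx hy _ ↦ ?_⟩
  · rw [tmul_sub, map_sub, PostHopf.rhd_mul_of_isPrimitive hx,
      PostHopf.rhd_mul_of_isPrimitive hx]
    noncomm_ring
  · rw [P.rhd_rhd, P.rhd_rhd, PostHopf.subProd_of_isPrimitive hx,
      PostHopf.subProd_of_isPrimitive hy]
    simp only [add_tmul, sub_tmul, map_add, map_sub]
    abel
end
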